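/- arXiv:2505.02946 — 3 statements merged into one kernel-verified Lean document; each statement's English description precedes it below -/
import Mathlib

section
/- Let H be a real Hilbert space, M a closed subspace of H, P the orthogonal projection of H onto M, and P⊥ := id − P. Then for every τ ∈ ℝ and all q, w, r ∈ H, ⟪τ • P⊥(q − w), r⟫ + ⟪w, τ • P⊥ r⟫ = ⟪q, τ • P⊥ r⟫. (With r the primal finite element residual R u_h, w = L*z_h the adjoint operator applied to the discrete dual solution, and q the dual forcing, this states that the implicit goal-oriented error estimator η₂ = ⟪τ P⊥(q − L*z_h), R u_h⟫ + ⟪L*z_h, τ P⊥(R u_h)⟫ coincides globally with the explicit estimator η₁ = ⟪q, τ P⊥(R u_h)⟫.) -/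
open RealInnerProductSpace

/-- **Global equivalence of the explicit and implicit goal-oriented estimators (Section 4.3).**
If `P` is the orthogonal projection of a real Hilbert space `H` onto a closed subspace `M` and
`P⊥ := id − P`, then for every stabilization parameter `τ ∈ ℝ` and all `q, w, r ∈ H`,
`⟪τ • P⊥(q − w), r⟫ + ⟪w, τ • P⊥ r⟫ = ⟪q, τ • P⊥ r⟫`. With `r = R u_h`, `w = L* z_h`, and `q`
the dual forcing, this says `η₂ = η₁` globally. -/
theorem explicit_implicit_estimator_equivalence
    (H : Type*) [NormedAddCommGroup H] [InnerProductSpace ℝ H] [CompleteSpace H]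
    (M : Submodule ℝ H) (hMclosed : IsClosed (M : Set H))
    (P : H →L[ℝ] H) (hPmem : ∀ x, P x ∈ M) (hPorth : ∀ x, x - P x ∈ Mᗮ)
    (τ : ℝ) (q w r : H) :
    ⟪τ • ((q - w) - P (q - w)), r⟫ + ⟪w, τ • (r - P r)⟫ = ⟪q, τ • (r - P r)⟫ := by
  have key : ∀ x : H, ⟪x - P x, r⟫ = ⟪x, r - P r⟫ := by
    intro x
    have h1 : ⟪x - P x, P r⟫ = 0 := by rw [real_inner_comm]; exact hPorth x (P r) (hPmem r)
    have h2 : ⟪r - P r, P x⟫ = 0 := by rw [real_inner_comm]; exact hPorth r (P x) (hPmem x)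
    have h2' : ⟪P x, r - P r⟫ = 0 := by rw [real_inner_comm]; exact h2
    have : ⟪x - P x, r⟫ = ⟪x - P x, r - P r⟫ := by
      rw [inner_sub_right, h1]; ring
    rw [this, inner_sub_left, h2']; ring
  rw [real_inner_smul_left, real_inner_smul_right, real_inner_smul_right,
    key (q - w), inner_sub_left, inner_sub_right]
  ring
end

section
/- Let H be a real Hilbert space, L : H → H a continuous linear operator with Hilbert-space adjoint L†, M a closed subspace of H with orthogonal projection P and P⊥ := id − P, and τ ∈ ℝ. Suppose u, u_h, z, z_h, f, q ∈ H satisfy L u = f, L† z = q, and the stabilized discrete primal equation tested against z_h: ⟪f − L u_h, z_h⟫ = ⟪τ • P⊥(f − L u_h), L† z_h⟫. Then ⟪q, u⟫ − ⟪q, u_h⟫ = ⟪z − z_h, f − L u_h⟫ + ⟪L† z_h, τ • P⊥(f − L u_h)⟫. -/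
open RealInnerProductSpace

/-- **Exact error representation underlying the implicit estimator (Section 4.2).** Let `H` be a
real Hilbert space, `L` a continuous linear operator with adjoint `L†`, `P` the orthogonal
projection onto a closed subspace `M`, `P⊥ := id − P`, and `τ ∈ ℝ`. If `L u = f`, `L† z = q`,
and the stabilized discrete primal equation tested against `z_h` holds,
`⟪f − L u_h, z_h⟫ = ⟪τ • P⊥(f − L u_h), L† z_h⟫`, then
`⟪q, u⟫ − ⟪q, u_h⟫ = ⟪z − z_h, f − L u_h⟫ + ⟪L† z_h, τ • P⊥(f − L u_h)⟫`. -/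
theorem implicit_error_representation
    (H : Type*) [NormedAddCommGroup H] [InnerProductSpace ℝ H] [CompleteSpace H]
    (L : H →L[ℝ] H)
    (M : Submodule ℝ H) (hMclosed : IsClosed (M : Set H))
    (P : H →L[ℝ] H) (hPmem : ∀ x, P x ∈ M) (hPorth : ∀ x, x - P x ∈ Mᗮ)
    (τ : ℝ) (u u_h z z_h f q : H)
    (hprimal : L u = f) (hdual : ContinuousLinearMap.adjoint L z = q)
    (hstab : ⟪f - L u_h, z_h⟫ =
      ⟪τ • ((f - L u_h) - P (f - L u_h)), ContinuousLinearMap.adjoint L z_h⟫) :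
    ⟪q, u⟫ - ⟪q, u_h⟫ =
      ⟪z - z_h, f - L u_h⟫ +
        ⟪ContinuousLinearMap.adjoint L z_h, τ • ((f - L u_h) - P (f - L u_h))⟫ := by
  subst hprimal hdual
  have h1 : ⟪ContinuousLinearMap.adjoint L z, u⟫ - ⟪ContinuousLinearMap.adjoint L z, u_h⟫
      = ⟪z, L u - L u_h⟫ := by
    rw [ContinuousLinearMap.adjoint_inner_left, ContinuousLinearMap.adjoint_inner_left,
      inner_sub_right]
  rw [h1, inner_sub_left]
  have h2 : ⟪z_h, L u - L u_h⟫ =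
      ⟪ContinuousLinearMap.adjoint L z_h, τ • ((L u - L u_h) - P (L u - L u_h))⟫ := by
    rw [real_inner_comm, hstab, real_inner_comm]
  linarith
end

section
/- Let H be a real Hilbert space, L : H → H a continuous linear operator with Hilbert-space adjoint L†, M a closed subspace of H with orthogonal projection P and P⊥ := id − P, and τ ∈ ℝ. Suppose u, u_h, z, z_h, f, q ∈ H satisfy L u = f, L† z = q, and ⟪f − L u_h, z_h⟫ = ⟪τ • P⊥(f − L u_h), L† z_h⟫. Then the error of the explicit goal-oriented estimator satisfies ⟪q, u⟫ − ⟪q, u_h⟫ − ⟪q, τ • P⊥(f − L u_h)⟫ = ⟪z − z_h − τ • P⊥(q − L† z_h), f − L u_h⟫. (The right-hand side is the pairing of the dual sub-grid-scale modeling error ε′_d = z − z_h − τ P⊥(q − L† z_h) with the primal residual.) -/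
open RealInnerProductSpace

/-- **Error of the explicit goal-oriented estimator (Sections 4.1–4.3).** Under the hypotheses of
the implicit error representation, the error of the explicit estimator
`η₁ = ⟪q, τ • P⊥(f − L u_h)⟫` equals the pairing of the dual sub-grid-scale modeling error
`ε′_d = z − z_h − τ P⊥(q − L† z_h)` with the primal residual `f − L u_h`. -/
theorem explicit_estimator_error
    (H : Type*) [NormedAddCommGroup H] [InnerProductSpace ℝ H] [CompleteSpace H]
    (L : H →L[ℝ] H)
    (M : Submodule ℝ H) (hMclosed : IsClosed (M : Set H))
    (P : H →L[ℝ] H) (hPmem : ∀ x, P x ∈ M) (hPorth : ∀ x, x - P x ∈ Mᗮ)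
    (τ : ℝ) (u u_h z z_h f q : H)
    (hprimal : L u = f) (hdual : ContinuousLinearMap.adjoint L z = q)
    (hstab : ⟪f - L u_h, z_h⟫ =
      ⟪τ • ((f - L u_h) - P (f - L u_h)), ContinuousLinearMap.adjoint L z_h⟫) :
    ⟪q, u⟫ - ⟪q, u_h⟫ - ⟪q, τ • ((f - L u_h) - P (f - L u_h))⟫ =
      ⟪z - z_h - τ • ((q - ContinuousLinearMap.adjoint L z_h) -
          P (q - ContinuousLinearMap.adjoint L z_h)), f - L u_h⟫ := by
  set r : H := f - L u_h with hr
  set s : H := q - ContinuousLinearMap.adjoint L z_h with hs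
  -- self-adjointness of the projection complement
  have key : ∀ x y : H, ⟪x - P x, y⟫ = ⟪x, y - P y⟫ := by
    intro x y
    have h1 : ⟪x - P x, P y⟫ = 0 := real_inner_comm (P y) (x - P x) ▸ (hPorth x) (P y) (hPmem y)
    have h2 : ⟪P x, y - P y⟫ = 0 := real_inner_comm (P x) (y - P y) ▸ (hPorth y) (P x) (hPmem x)
    have e1 : ⟪x - P x, y⟫ = ⟪x - P x, y - P y⟫ := by
      rw [inner_sub_right, h1]; ring
    have e2 : ⟪x, y - P y⟫ = ⟪x - P x, y - P y⟫ := by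
      rw [inner_sub_left, h2]; ring
    rw [e1, e2]
  have h1 : ⟪q, u⟫ - ⟪q, u_h⟫ = ⟪z, r⟫ := by
    rw [← hdual, ContinuousLinearMap.adjoint_inner_left, ContinuousLinearMap.adjoint_inner_left,
      hr, inner_sub_right, hprimal]
  have h2 : ⟪s - P s, r⟫ = ⟪q, r - P r⟫ - ⟪ContinuousLinearMap.adjoint L z_h, r - P r⟫ := by
    rw [key s r, hs, inner_sub_left]
  have h3 : ⟪r, z_h⟫ = τ * ⟪r - P r, ContinuousLinearMap.adjoint L z_h⟫ := by
    rw [hstab, real_inner_smul_left]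
  have h4 : ⟪ContinuousLinearMap.adjoint L z_h, r - P r⟫ = ⟪r - P r, ContinuousLinearMap.adjoint L z_h⟫ :=
    real_inner_comm _ _
  have h5 : ⟪z_h, r⟫ = ⟪r, z_h⟫ := real_inner_comm _ _
  rw [inner_sub_left, inner_sub_left, real_inner_smul_left, real_inner_smul_right]
  rw [h2]
  linear_combination h1 + h5 + h3 - τ * h4
end
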